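/- (Cluster safety under worst-case braking, single lane.) Let a > 0, s > 0, N ≥ 2, and consider N vehicles on a single lane with initial positions p₁(0) > p₂(0) > ⋯ > p_N(0) (vehicle 1 is ahead) and initial speeds v₁, …, v_N ≥ 0, all of which brake simultaneously with deceleration a from time 0, so vehicle n has trajectory pos(p_n(0), v_n, t). If for every n ∈ {1, …, N−1} the initial gap satisfies p_n(0) − p_{n+1}(0) ≥ s + max(0, v_{n+1}² − v_n²)/(2a), then for all t ≥ 0 and all n ∈ {1, …, N−1}, pos(p_n(0), v_n, t) − pos(p_{n+1}(0), v_{n+1}, t) ≥ s; i.e. no collision occurs in the cluster in the worst case scenario. -/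

import Mathlib

/-!
Braking from speed `v`, the speed at time `t` is `r = max (v - a t) 0` and the distance covered is
`(v² - r²) / (2a)`. This distance is nondecreasing in `v`, so a follower that is not faster than its
leader never gains on it; a faster follower gains at most `(w² - v²) / (2a)`, because its residual
speed is at least the leader's.
-/

/-- Braked trajectory: a vehicle with initial position `p` and initial speed `v ≥ 0`
braking at constant deceleration `a > 0` until it stops. -/
noncomputable def pos (a p v t : ℝ) : ℝ :=
  if t ≤ v / a then p + v * t - (a/2) * t^2 else p + v^2 / (2*a)

section Braking

variable {a p q v w t : ℝ}

theorem pos_eq (ha : 0 < a) : pos a p v t = p + (v ^ 2 - max (v - a * t) 0 ^ 2) / (2 * a) := by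
  unfold pos
  split_ifs with hstop
  · rw [le_div_iff₀ ha] at hstop
    rw [max_eq_left (by linarith)]
    field_simp
    ring
  · rw [not_le, div_lt_iff₀ ha] at hstop
    rw [max_eq_right (by linarith)]
    ring

theorem pos_sub_pos_of_speed_eq : pos a p v t - pos a q v t = p - q := by
  unfold pos
  split_ifs <;> ring

theorem pos_le_pos_of_le (ha : 0 < a) (ht : 0 ≤ t) (hv : 0 ≤ v) (hvw : v ≤ w) :
    pos a p v t ≤ pos a p w t := by
  rw [pos_eq ha, pos_eq ha, add_le_add_iff_left]
  refine div_le_div_of_nonneg_right ?_ (by positivity)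
  set sv := max (v - a * t) 0
  set sw := max (w - a * t) 0
  have hsv : 0 ≤ sv := le_max_right _ _
  have hsv_le_sw : sv ≤ sw := max_le_max_right 0 (by linarith)
  have hdiff : sw - sv ≤ w - v := by
    have : sw ≤ sv + (w - v) := max_le (by linarith [le_max_left (v - a * t) 0]) (by linarith)
    linarith
  have hsum : sw + sv ≤ w + v :=
    add_le_add (max_le (by nlinarith) (hv.trans hvw)) (max_le (by nlinarith) hv)
  nlinarith [mul_le_mul hdiff hsum (by linarith) (by linarith)]

theorem pos_sub_pos_le (ha : 0 < a) (hvw : v ≤ w) :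
    pos a p w t - pos a p v t ≤ (w ^ 2 - v ^ 2) / (2 * a) := by
  rw [pos_eq ha, pos_eq ha, add_sub_add_left_eq_sub, ← sub_div]
  refine div_le_div_of_nonneg_right ?_ (by positivity)
  nlinarith [le_max_right (v - a * t) 0, max_le_max_right 0 (sub_le_sub_right hvw (a * t))]

theorem sub_sub_le_pos_sub_pos (ha : 0 < a) (ht : 0 ≤ t) (hw : 0 ≤ w) :
    p - q - max 0 (w ^ 2 - v ^ 2) / (2 * a) ≤ pos a p v t - pos a q w t := by
  have hsame : pos a p v t - pos a q v t = p - q := pos_sub_pos_of_speed_eq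
  rcases le_total w v with hwv | hvw
  · have hmax : 0 ≤ max 0 (w ^ 2 - v ^ 2) / (2 * a) := by positivity
    linarith [pos_le_pos_of_le (p := q) ha ht hw hwv]
  · have hmax : (w ^ 2 - v ^ 2) / (2 * a) ≤ max 0 (w ^ 2 - v ^ 2) / (2 * a) :=
      div_le_div_of_nonneg_right (le_max_right _ _) (by positivity)
    linarith [pos_sub_pos_le (p := q) (t := t) ha hvw]

end Braking

theorem cluster_worst_case_braking_safety_general (a s : ℝ) (N : ℕ) (p v : ℕ → ℝ)
    (ha : 0 < a)
    (hv : ∀ n, 1 ≤ n → n ≤ N → 0 ≤ v n)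
    (hgap : ∀ n, 1 ≤ n → n < N →
      p n - p (n+1) ≥ s + max 0 ((v (n+1))^2 - (v n)^2) / (2*a)) :
    ∀ t ≥ (0:ℝ), ∀ n, 1 ≤ n → n < N →
      pos a (p n) (v n) t - pos a (p (n+1)) (v (n+1)) t ≥ s := by
  intro t ht n h1 h2
  have hfollower : 0 ≤ v (n + 1) := hv (n + 1) (by omega) h2
  have hshrink := sub_sub_le_pos_sub_pos (p := p n) (q := p (n + 1)) (v := v n) ha ht hfollower
  linarith [hgap n h1 h2]

/-- Cluster safety under worst-case braking on a single lane: `N ≥ 2` vehicles,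
vehicle `1` ahead (`p 1 > p 2 > ⋯ > p N`), all brake simultaneously with
deceleration `a`. If every consecutive initial gap is at least
`s + max(0, v_{n+1}² − v_n²)/(2a)`, then no consecutive gap ever drops below `s`,
i.e. no collision occurs in the cluster in the worst case scenario. -/
theorem cluster_worst_case_braking_safety (a s : ℝ) (N : ℕ) (p v : ℕ → ℝ)
    (ha : 0 < a) (hs : 0 < s) (hN : 2 ≤ N)
    (hv : ∀ n, 1 ≤ n → n ≤ N → 0 ≤ v n)
    (hp : ∀ n, 1 ≤ n → n < N → p n > p (n+1))
    (hgap : ∀ n, 1 ≤ n → n < N →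
      p n - p (n+1) ≥ s + max 0 ((v (n+1))^2 - (v n)^2) / (2*a)) :
    ∀ t ≥ (0:ℝ), ∀ n, 1 ≤ n → n < N →
      pos a (p n) (v n) t - pos a (p (n+1)) (v (n+1)) t ≥ s :=
  cluster_worst_case_braking_safety_general a s N p v ha hv hgap
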